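/- If G is a connected graph with n(G) ≥ 5 and ω(G) = n(G) - 2, then n(G) - 4 ≤ dim_l(G) ≤ n(G) - 3; moreover dim_l(G) = n(G) - 3 if and only if G is {Γ_1,Γ_2}-free, and dim_l(G) = n(G) - 4 if and only if G contains an induced subgraph isomorphic to Γ_1 or Γ_2. -/

import Mathlib

open SimpleGraph

variable {V : Type*}

/-- `W` is a local resolving set of `G`: any two adjacent vertices outside `W`
have different distance to some vertex of `W`. -/
def IsLocalResolvingSet [Fintype V] (G : SimpleGraph V) (W : Finset V) : Prop :=
  ∀ u v : V, u ∉ W → v ∉ W → G.Adj u v → ∃ w ∈ W, G.dist u w ≠ G.dist v w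

/-- The local metric dimension of `G`: minimum cardinality of a local resolving set. -/
noncomputable def localDim [Fintype V] (G : SimpleGraph V) : ℕ :=
  sInf {k | ∃ W : Finset V, IsLocalResolvingSet G W ∧ W.card = k}

/-- `K_n^-(λ,μ)`: complete graph on `Fin n` minus the edges of a complete bipartite
subgraph between `L = [0,lam)` and `M = [lam, lam+mu)`. -/
def KnMinus (n lam mu : ℕ) : SimpleGraph (Fin n) where
  Adj u v := u ≠ v ∧ ¬((u.val < lam ∧ lam ≤ v.val ∧ v.val < lam + mu) ∨
                       (v.val < lam ∧ lam ≤ u.val ∧ u.val < lam + mu))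
  symm := by
    constructor
    intro u v ⟨h1, h2⟩
    exact ⟨h1.symm, fun h => h2 h.symm⟩
  loopless := ⟨fun u h => h.1 rfl⟩

/-- The graph `Γ₁`: a `K₄` on `{0,1,2,3}` plus edges `0-4`, `1-4`, `0-5`, `2-5`
(vertices `0,…,5` standing for `v₁,…,v₆`). -/
def Gamma1 : SimpleGraph (Fin 6) :=
  SimpleGraph.fromRel (fun u v => ((u : ℕ), (v : ℕ)) ∈
    [(0,1),(0,2),(0,3),(1,2),(1,3),(2,3),(0,4),(1,4),(0,5),(2,5)])

/-- The graph `Γ₂ = Γ₁` plus the edge `v₅v₆`. -/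
def Gamma2 : SimpleGraph (Fin 6) :=
  SimpleGraph.fromRel (fun u v => ((u : ℕ), (v : ℕ)) ∈
    [(0,1),(0,2),(0,3),(1,2),(1,3),(2,3),(0,4),(1,4),(0,5),(2,5),(4,5)])

/-- `G_ℓ`: a universal vertex (`none`) joined to the disjoint union of `ℓ` triangles. -/
def Gell (l : ℕ) : SimpleGraph (Option (Fin l × Fin 3)) where
  Adj u v := u ≠ v ∧ ∀ x y, u = some x → v = some y → x.1 = y.1
  symm := by
    constructor
    intro u v ⟨h1, h2⟩
    exact ⟨h1.symm, fun x y hx hy => (h2 y x hy hx).symm⟩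
  loopless := ⟨fun u h => h.1 rfl⟩

/-!
Let `Q` be a maximum clique, so that `Qᶜ = {x, y}`. Two vertices of `Q` outside a local
resolving set `W` are adjacent and at distance 1 from every other vertex of `Q`, so only a
vertex of `W \ Q ⊆ {x, y}` can tell them apart; and the distances from a clique to a fixed
vertex take at most two consecutive values. Hence `#(Q \ W) ≤ 2 ^ #(W \ Q)`, which forces
`#W ≥ n - 4`, with equality only if `x, y ∈ W` and the four vertices of `Q \ W` realise all four
distance profiles `{1, 2}²` to `(x, y)`: together with `x` and `y` they induce `Γ₁` or `Γ₂`.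
Conversely, the `K₄` of an induced `Γᵢ` is resolved by `v₅` and `v₆`, and the complement of three
well-chosen vertices (`x`, then `y` or a neighbour of `x` in `Q`, then one more vertex of `Q`)
is always a local resolving set.
-/

open Finset

section LocalResolving

variable {G : SimpleGraph V}

lemma dist_ne_of_xor_adj {u v w : V} (h : Xor (G.Adj u w) (G.Adj v w)) :
    G.dist u w ≠ G.dist v w := by
  rcases h with ⟨hu, hv⟩ | ⟨hv, hu⟩
  · rw [dist_eq_one_iff_adj.mpr hu]
    exact fun h => hv (dist_eq_one_iff_adj.mp h.symm)
  · rw [dist_eq_one_iff_adj.mpr hv]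
    exact fun h => hu (dist_eq_one_iff_adj.mp h)

variable [Fintype V]

lemma localDim_le {W : Finset V} (hW : IsLocalResolvingSet G W) : localDim G ≤ #W :=
  Nat.sInf_le ⟨W, hW, rfl⟩

lemma exists_isLocalResolvingSet_card_eq_localDim (G : SimpleGraph V) :
    ∃ W : Finset V, IsLocalResolvingSet G W ∧ #W = localDim G := by
  have : {k | ∃ W : Finset V, IsLocalResolvingSet G W ∧ #W = k}.Nonempty :=
    ⟨_, univ, fun u _ hu => absurd (mem_univ u) hu, rfl⟩
  exact Nat.sInf_mem this

variable [DecidableEq V]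

lemma isLocalResolvingSet_compl_of_xor {S : Finset V}
    (h : ∀ u ∈ S, ∀ v ∈ S, G.Adj u v → ∃ w ∉ S, Xor (G.Adj u w) (G.Adj v w)) :
    IsLocalResolvingSet G Sᶜ := by
  intro u v hu hv huv
  rw [notMem_compl] at hu hv
  obtain ⟨w, hw, hxor⟩ := h u hu v hv huv
  exact ⟨w, mem_compl.mpr hw, dist_ne_of_xor_adj hxor⟩

lemma isLocalResolvingSet_compl_triple {a b c : V}
    (hab : G.Adj a b → ∃ w ∉ ({a, b, c} : Finset V), Xor (G.Adj a w) (G.Adj b w))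
    (hac : G.Adj a c → ∃ w ∉ ({a, b, c} : Finset V), Xor (G.Adj a w) (G.Adj c w))
    (hbc : G.Adj b c → ∃ w ∉ ({a, b, c} : Finset V), Xor (G.Adj b w) (G.Adj c w)) :
    IsLocalResolvingSet G {a, b, c}ᶜ := by
  refine isLocalResolvingSet_compl_of_xor fun u hu v hv huv => ?_
  have swap {p q : V} (h : ∃ w ∉ ({a, b, c} : Finset V), Xor (G.Adj p w) (G.Adj q w)) :
      ∃ w ∉ ({a, b, c} : Finset V), Xor (G.Adj q w) (G.Adj p w) :=
    let ⟨w, hw, hxor⟩ := h; ⟨w, hw, Or.symm hxor⟩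
  simp only [mem_insert, mem_singleton] at hu hv
  rcases hu with rfl | rfl | rfl <;> rcases hv with rfl | rfl | rfl
  all_goals first
    | exact absurd huv (G.loopless.irrefl _)
    | exact hab huv | exact hac huv | exact hbc huv
    | exact swap (hab huv.symm) | exact swap (hac huv.symm) | exact swap (hbc huv.symm)

lemma isLocalResolvingSet_compl_map {W : Type*} {H : SimpleGraph W} (f : H ↪g G) {S : Finset W}
    (h : ∀ u ∈ S, ∀ v ∈ S, H.Adj u v → ∃ w ∉ S, Xor (H.Adj u w) (H.Adj v w)) :
    IsLocalResolvingSet G (S.map f.toEmbedding)ᶜ := by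
  refine isLocalResolvingSet_compl_of_xor ?_
  simp only [mem_map, RelEmbedding.coe_toEmbedding, forall_exists_index, and_imp,
    forall_apply_eq_imp_iff₂, f.map_adj_iff]
  intro u hu v hv huv
  obtain ⟨w, hw, hxor⟩ := h u hu v hv huv
  exact ⟨f w, by simpa only [mem_map, RelEmbedding.coe_toEmbedding, f.injective.eq_iff,
    exists_eq_right], by rwa [f.map_adj_iff, f.map_adj_iff]⟩

lemma localDim_le_card_sub_card_of_embedding {W : Type*} {H : SimpleGraph W} (f : H ↪g G)
    {S : Finset W}
    (h : ∀ u ∈ S, ∀ v ∈ S, H.Adj u v → ∃ w ∉ S, Xor (H.Adj u w) (H.Adj v w)) :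
    localDim G ≤ Fintype.card V - #S := by
  simpa [card_compl] using localDim_le (isLocalResolvingSet_compl_map f h)

lemma localDim_le_card_sub_four_of_gamma
    (h : Nonempty (Gamma1 ↪g G) ∨ Nonempty (Gamma2 ↪g G)) :
    localDim G ≤ Fintype.card V - 4 := by
  rcases h with ⟨⟨f⟩⟩ | ⟨⟨f⟩⟩
  · exact localDim_le_card_sub_card_of_embedding f (S := {0, 1, 2, 3})
      (by simp only [Gamma1, fromRel_adj]; decide)
  · exact localDim_le_card_sub_card_of_embedding f (S := {0, 1, 2, 3})
      (by simp only [Gamma2, fromRel_adj]; decide)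

end LocalResolving

section Distance

variable {G : SimpleGraph V}

lemma dist_le_dist_add_one_of_adj {u v : V} (h : G.Adj u v) (z : V) :
    G.dist u z ≤ G.dist v z + 1 := by
  have := h.symm.diff_dist_adj (u := z)
  rw [SimpleGraph.dist_comm (u := z), SimpleGraph.dist_comm (u := z)] at this
  omega

lemma dist_eq_dist_add_one_of_forall_adj_eq (hconn : G.Connected) {x y u : V}
    (hx : ∀ z, G.Adj x z → z = y) (hu : u ≠ x) : G.dist u x = G.dist u y + 1 := by
  obtain ⟨p, hp⟩ := hconn.exists_walk_length_eq_dist x u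
  cases p with
  | nil => exact absurd rfl hu
  | cons h q =>
    obtain rfl := hx _ h
    have hq : G.dist _ u ≤ q.length := G.dist_le q
    have htri := dist_le_dist_add_one_of_adj h u
    rw [Walk.length_cons] at hp
    rw [SimpleGraph.dist_comm (u := u), SimpleGraph.dist_comm (u := u)]
    omega

variable {Q W : Finset V}

lemma card_image_dist_le_two (hQ : G.IsClique (Q : Set V)) (z : V) :
    #(Q.image (G.dist · z)) ≤ 2 := by
  rcases Q.eq_empty_or_nonempty with rfl | hne
  · simp
  obtain ⟨u₀, hu₀, hmin⟩ := exists_min_image Q (G.dist · z) hne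
  calc #(Q.image (G.dist · z)) ≤ #(Icc (G.dist u₀ z) (G.dist u₀ z + 1)) := by
        refine card_le_card fun m hm => ?_
        obtain ⟨u, hu, rfl⟩ := mem_image.mp hm
        obtain rfl | hne := eq_or_ne u u₀
        · simp
        · exact mem_Icc.mpr ⟨hmin u hu, dist_le_dist_add_one_of_adj (hQ hu hu₀ hne) z⟩
    _ = 2 := by rw [Nat.card_Icc]; omega

lemma dist_mem_Icc_one_two (hconn : G.Connected) (hQ : G.IsClique (Q : Set V)) {z q u : V}
    (hz : z ∉ Q) (hq : q ∈ Q) (hqz : G.Adj q z) (hu : u ∈ Q) : G.dist u z ∈ Icc 1 2 := by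
  refine mem_Icc.mpr ⟨hconn.pos_dist_of_ne (ne_of_mem_of_not_mem hu hz), ?_⟩
  obtain rfl | hne := eq_or_ne u q
  · exact (dist_eq_one_iff_adj.mpr hqz).trans_le one_le_two
  · have := dist_le_dist_add_one_of_adj (hQ hu hq hne) z
    rw [dist_eq_one_iff_adj.mpr hqz] at this
    exact this

variable [Fintype V] [DecidableEq V]

lemma exists_mem_sdiff_dist_ne (hQ : G.IsClique (Q : Set V)) (hW : IsLocalResolvingSet G W)
    {u v : V} (hu : u ∈ Q \ W) (hv : v ∈ Q \ W) (huv : u ≠ v) :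
    ∃ w ∈ W \ Q, G.dist u w ≠ G.dist v w := by
  rw [mem_sdiff] at hu hv
  obtain ⟨w, hwW, hw⟩ := hW u v hu.2 hv.2 (hQ hu.1 hv.1 huv)
  refine ⟨w, mem_sdiff.mpr ⟨hwW, fun hwQ => hw ?_⟩, hw⟩
  have hwu : u ≠ w := fun h => hu.2 (h ▸ hwW)
  have hwv : v ≠ w := fun h => hv.2 (h ▸ hwW)
  rw [dist_eq_one_iff_adj.mpr (hQ hu.1 hwQ hwu), dist_eq_one_iff_adj.mpr (hQ hv.1 hwQ hwv)]

lemma card_sdiff_le_two_pow (hQ : G.IsClique (Q : Set V)) (hW : IsLocalResolvingSet G W) :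
    #(Q \ W) ≤ 2 ^ #(W \ Q) := by
  let profile (u : V) : ∀ w ∈ W \ Q, ℕ := fun w _ => G.dist u w
  calc #(Q \ W) ≤ #((W \ Q).pi fun w => Q.image (G.dist · w)) := by
        refine card_le_card_of_injOn profile (fun u hu => ?_) fun u hu v hv huv => ?_
        · exact mem_pi.mpr fun w _ => mem_image_of_mem _ (mem_sdiff.mp hu).1
        · by_contra hne
          obtain ⟨w, hw, hdist⟩ := exists_mem_sdiff_dist_ne hQ hW hu hv hne
          exact hdist (congrFun (congrFun huv w) hw)
    _ = ∏ w ∈ W \ Q, #(Q.image (G.dist · w)) := card_pi _ _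
    _ ≤ ∏ _w ∈ W \ Q, 2 := prod_le_prod' fun w _ => card_image_dist_le_two hQ w
    _ = 2 ^ #(W \ Q) := prod_const 2

lemma card_add_card_sdiff_le (hQ : G.IsClique (Q : Set V)) (hW : IsLocalResolvingSet G W) :
    #Q + #(W \ Q) ≤ #W + 2 ^ #(W \ Q) := by
  have hQW := card_sdiff_add_card_inter Q W
  have hWQ := card_sdiff_add_card_inter W Q
  have := card_sdiff_le_two_pow hQ hW
  rw [inter_comm] at hWQ
  omega

end Distance

section NearlyComplete

variable {G : SimpleGraph V} {Q W : Finset V} {x y : V}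

lemma nonempty_gamma_embedding (hQ : G.IsClique (Q : Set V)) {a b c d : V}
    (ha : a ∈ Q) (hb : b ∈ Q) (hc : c ∈ Q) (hd : d ∈ Q)
    (hx : x ∉ Q) (hy : y ∉ Q) (hxy : x ≠ y)
    (hax : G.Adj a x) (hbx : G.Adj b x) (hcx : ¬ G.Adj c x) (hdx : ¬ G.Adj d x)
    (hay : G.Adj a y) (hby : ¬ G.Adj b y) (hcy : G.Adj c y) (hdy : ¬ G.Adj d y) :
    Nonempty (Gamma1 ↪g G) ∨ Nonempty (Gamma2 ↪g G) := by
  have hab : a ≠ b := fun h => hby (h ▸ hay)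
  have hac : a ≠ c := fun h => hcx (h ▸ hax)
  have had : a ≠ d := fun h => hdx (h ▸ hax)
  have hbc : b ≠ c := fun h => hcx (h ▸ hbx)
  have hbd : b ≠ d := fun h => hdx (h ▸ hbx)
  have hcd : c ≠ d := fun h => hdy (h ▸ hcy)
  have := hQ ha hb hab; have := hQ ha hc hac; have := hQ ha hd had
  have := hQ hb hc hbc; have := hQ hb hd hbd; have := hQ hc hd hcd
  have := ne_of_mem_of_not_mem ha hx; have := ne_of_mem_of_not_mem hb hx
  have := ne_of_mem_of_not_mem hc hx; have := ne_of_mem_of_not_mem hd hx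
  have := ne_of_mem_of_not_mem ha hy; have := ne_of_mem_of_not_mem hb hy
  have := ne_of_mem_of_not_mem hc hy; have := ne_of_mem_of_not_mem hd hy
  let f : Fin 6 → V := ![a, b, c, d, x, y]
  have hf : Function.Injective f := by
    intro i j h
    fin_cases i <;> fin_cases j <;> simp_all [f, eq_comm]
  by_cases hadj : G.Adj x y
  · refine Or.inr ⟨⟨⟨f, hf⟩, fun {i j} => ?_⟩⟩
    fin_cases i <;> fin_cases j <;> simp_all [f, Gamma2, G.adj_comm]
  · refine Or.inl ⟨⟨⟨f, hf⟩, fun {i j} => ?_⟩⟩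
    fin_cases i <;> fin_cases j <;> simp_all [f, Gamma1, G.adj_comm]

variable [Fintype V] [DecidableEq V]

lemma notMem_iff_of_compl_eq_pair (hQc : Qᶜ = {x, y}) {v : V} : v ∉ Q ↔ v = x ∨ v = y := by
  rw [← mem_compl, hQc, mem_insert, mem_singleton]

lemma notMem_of_compl_eq_pair (hQc : Qᶜ = {x, y}) : x ∉ Q ∧ y ∉ Q :=
  ⟨(notMem_iff_of_compl_eq_pair hQc).mpr (Or.inl rfl),
    (notMem_iff_of_compl_eq_pair hQc).mpr (Or.inr rfl)⟩

lemma dist_eq_dist_add_one_of_forall_not_adj (hconn : G.Connected) (hQc : Qᶜ = {x, y})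
    (hx : ∀ q ∈ Q, ¬ G.Adj x q) {u : V} (hu : u ∈ Q) : G.dist u x = G.dist u y + 1 := by
  refine dist_eq_dist_add_one_of_forall_adj_eq hconn (fun z hz => ?_) fun h => ?_
  · rcases (notMem_iff_of_compl_eq_pair hQc).mp fun hzQ => hx z hzQ hz with rfl | rfl
    · exact absurd hz (G.loopless.irrefl _)
    · rfl
  · exact (notMem_iff_of_compl_eq_pair hQc).mpr (Or.inl h) hu

lemma exists_mem_adj_of_forall_not_adj (hconn : G.Connected) (hQc : Qᶜ = {x, y})
    (hQne : Q.Nonempty) (hx : ∀ q ∈ Q, ¬ G.Adj x q) : ∃ q ∈ Q, G.Adj y q := by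
  by_contra! hy
  obtain ⟨u, hu⟩ := hQne
  have := dist_eq_dist_add_one_of_forall_not_adj hconn hQc hx hu
  have := dist_eq_dist_add_one_of_forall_not_adj hconn (pair_comm x y ▸ hQc) hy hu
  omega

lemma exists_mem_adj_of_injOn (hconn : G.Connected) (hQ : G.IsClique (Q : Set V))
    (hQc : Qᶜ = {x, y}) {T : Finset V} (hTQ : T ⊆ Q)
    (hinj : Set.InjOn (fun u => (G.dist u x, G.dist u y)) T) (hT : 2 < #T) :
    ∃ q ∈ Q, G.Adj x q := by
  by_contra! hx
  have hdist {u} (hu : u ∈ T) := dist_eq_dist_add_one_of_forall_not_adj hconn hQc hx (hTQ hu)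
  have hinjy : Set.InjOn (G.dist · y) T := fun u hu v hv h => hinj hu hv <| by
    simp only [hdist hu, hdist hv, h]
  have := card_le_card_of_injOn _ (fun u hu => mem_image_of_mem _ (hTQ hu)) hinjy
  have := card_image_dist_le_two hQ y
  omega

lemma card_le_card_add_two (hQ : G.IsClique (Q : Set V)) (hQc : #Qᶜ = 2)
    (hW : IsLocalResolvingSet G W) : #Q ≤ #W + 2 := by
  have := card_add_card_sdiff_le hQ hW
  have hk : #(W \ Q) ≤ 2 := hQc ▸ card_le_card (sdiff_eq_inter_compl W Q ▸ inter_subset_right)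
  interval_cases #(W \ Q) <;> omega

lemma compl_subset_and_four_le_card_sdiff (hQ : G.IsClique (Q : Set V)) (hQc : #Qᶜ = 2)
    (hW : IsLocalResolvingSet G W) (h : #W + 2 ≤ #Q) : Qᶜ ⊆ W ∧ 4 ≤ #(Q \ W) := by
  have := card_add_card_sdiff_le hQ hW
  have hsub : W \ Q ⊆ Qᶜ := sdiff_eq_inter_compl W Q ▸ inter_subset_right
  have hk : #(W \ Q) ≤ 2 := hQc ▸ card_le_card hsub
  have hk2 : #(W \ Q) = 2 := by interval_cases #(W \ Q) <;> omega
  refine ⟨eq_of_subset_of_card_le hsub (by omega) ▸ sdiff_subset, ?_⟩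
  have hQW := card_sdiff_add_card_inter Q W
  have hWQ := card_sdiff_add_card_inter W Q
  rw [inter_comm] at hWQ
  omega

lemma nonempty_gamma_embedding_of_card_add_two_le (hconn : G.Connected)
    (hQ : G.IsClique (Q : Set V)) (hQc : Qᶜ = {x, y}) (hxy : x ≠ y)
    (hW : IsLocalResolvingSet G W) (h : #W + 2 ≤ #Q) :
    Nonempty (Gamma1 ↪g G) ∨ Nonempty (Gamma2 ↪g G) := by
  obtain ⟨hQW, h4⟩ :=
    compl_subset_and_four_le_card_sdiff hQ (by rw [hQc, card_pair hxy]) hW h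
  obtain ⟨hx, hy⟩ := notMem_of_compl_eq_pair hQc
  let profile (u : V) : ℕ × ℕ := (G.dist u x, G.dist u y)
  have hinj : Set.InjOn profile (Q \ W : Finset V) := by
    intro u hu v hv huv
    by_contra hne
    obtain ⟨w, hw, hdist⟩ := exists_mem_sdiff_dist_ne hQ hW hu hv hne
    rcases (notMem_iff_of_compl_eq_pair hQc).mp (mem_sdiff.mp hw).2 with rfl | rfl
    · exact hdist (congrArg Prod.fst huv)
    · exact hdist (congrArg Prod.snd huv)
  obtain ⟨qx, hqx, hxqx⟩ := exists_mem_adj_of_injOn hconn hQ hQc sdiff_subset hinj (by omega)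
  obtain ⟨qy, hqy, hyqy⟩ := exists_mem_adj_of_injOn hconn hQ (pair_comm x y ▸ hQc)
    sdiff_subset (fun u hu v hv huv => hinj hu hv (Prod.swap_injective huv)) (by omega)
  have hmaps :
      Set.MapsTo profile (Q \ W : Finset V) (Icc 1 2 ×ˢ Icc 1 2 : Finset (ℕ × ℕ)) := fun u hu =>
    mem_product.mpr ⟨dist_mem_Icc_one_two hconn hQ hx hqx hxqx.symm (mem_sdiff.mp hu).1,
      dist_mem_Icc_one_two hconn hQ hy hqy hyqy.symm (mem_sdiff.mp hu).1⟩
  have hsurj := surjOn_of_injOn_of_card_le profile hmaps hinj (by simp; omega)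
  obtain ⟨a, ha, hpa⟩ := hsurj (show ((1, 1) : ℕ × ℕ) ∈ _ by decide)
  obtain ⟨b, hb, hpb⟩ := hsurj (show ((1, 2) : ℕ × ℕ) ∈ _ by decide)
  obtain ⟨c, hc, hpc⟩ := hsurj (show ((2, 1) : ℕ × ℕ) ∈ _ by decide)
  obtain ⟨d, hd, hpd⟩ := hsurj (show ((2, 2) : ℕ × ℕ) ∈ _ by decide)
  simp only [profile, Prod.mk.injEq, mem_coe, mem_sdiff] at hpa hpb hpc hpd ha hb hc hd
  have nadj {u z : V} (h : G.dist u z = 2) : ¬ G.Adj u z :=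
    dist_eq_one_iff_adj.not.mp (by omega)
  exact nonempty_gamma_embedding hQ ha.1 hb.1 hc.1 hd.1 hx hy hxy
    (dist_eq_one_iff_adj.mp hpa.1) (dist_eq_one_iff_adj.mp hpb.1) (nadj hpc.1) (nadj hpd.1)
    (dist_eq_one_iff_adj.mp hpa.2) (nadj hpb.2) (dist_eq_one_iff_adj.mp hpc.2) (nadj hpd.2)

end NearlyComplete

section MaximumClique

variable [Fintype V] [DecidableEq V] {G : SimpleGraph V} {Q : Finset V} {x y : V}

lemma exists_mem_not_adj (hQ : G.IsMaximumClique Q) {z : V} (hz : z ∉ Q) :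
    ∃ q ∈ Q, ¬ G.Adj z q := by
  by_contra! h
  have := hQ.maximum (insert z Q) <| by
    rw [coe_insert]
    exact hQ.isClique.insert fun q hq _ => h q hq
  rw [card_insert_of_notMem hz] at this
  omega

lemma exists_xor_adj_of_adj (hQ : G.IsMaximumClique Q) {z u : V} (hz : z ∉ Q) (hu : u ∈ Q)
    (h : G.Adj z u) : ∃ w ∈ Q, w ≠ u ∧ Xor (G.Adj z w) (G.Adj u w) := by
  obtain ⟨w, hw, hzw⟩ := exists_mem_not_adj hQ hz
  have hwu : w ≠ u := fun h' => hzw (h' ▸ h)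
  exact ⟨w, hw, hwu, Or.inr ⟨hQ.isClique hu hw hwu.symm, hzw⟩⟩

lemma isLocalResolvingSet_compl_pair_insert (hQ : G.IsMaximumClique Q) (hQc : Qᶜ = {x, y})
    {u : V} (hu : u ∈ Q)
    (hsep : G.Adj x y → ∃ w ∈ Q, w ≠ u ∧ Xor (G.Adj x w) (G.Adj y w)) :
    IsLocalResolvingSet G {x, y, u}ᶜ := by
  obtain ⟨hx, hy⟩ := notMem_of_compl_eq_pair hQc
  have hout {w : V} (hw : w ∈ Q) (hwu : w ≠ u) : w ∉ ({x, y, u} : Finset V) := by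
    simp only [mem_insert, mem_singleton, not_or]
    exact ⟨ne_of_mem_of_not_mem hw hx, ne_of_mem_of_not_mem hw hy, hwu⟩
  refine isLocalResolvingSet_compl_triple (fun h => ?_) (fun h => ?_) (fun h => ?_)
  · obtain ⟨w, hw, hwu, hxor⟩ := hsep h
    exact ⟨w, hout hw hwu, hxor⟩
  · obtain ⟨w, hw, hwu, hxor⟩ := exists_xor_adj_of_adj hQ hx hu h
    exact ⟨w, hout hw hwu, hxor⟩
  · obtain ⟨w, hw, hwu, hxor⟩ := exists_xor_adj_of_adj hQ hy hu h
    exact ⟨w, hout hw hwu, hxor⟩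

lemma card_add_two_le_of_forall_adj (hQ : G.IsMaximumClique Q) {N : Finset V} (hNQ : N ⊆ Q)
    (hx : x ∉ Q) (hy : y ∉ Q) (hxy : G.Adj x y) (hxN : ∀ q ∈ N, G.Adj x q)
    (hyN : ∀ q ∈ N, G.Adj y q) : #N + 2 ≤ #Q := by
  have hclique : G.IsClique ((insert x (insert y N) : Finset V) : Set V) := by
    rw [coe_insert, coe_insert]
    refine ((hQ.isClique.subset (coe_subset.mpr hNQ)).insert fun q hq _ => hyN q hq).insert ?_
    rintro q (rfl | hq) -
    · exact hxy
    · exact hxN q hq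
  have := hQ.maximum _ hclique
  rwa [card_insert_of_notMem (by simpa [hxy.ne] using fun h => hx (hNQ h)),
    card_insert_of_notMem fun h => hy (hNQ h)] at this

lemma exists_isLocalResolvingSet_compl_of_twins (hconn : G.Connected)
    (hQ : G.IsMaximumClique Q) (hQc : Qᶜ = {x, y}) (hQne : Q.Nonempty) (hxy : G.Adj x y)
    (htwin : ∀ q ∈ Q, G.Adj x q ↔ G.Adj y q) :
    ∃ S : Finset V, #S = 3 ∧ IsLocalResolvingSet G Sᶜ := by
  classical
  obtain ⟨hx, hy⟩ := notMem_of_compl_eq_pair hQc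
  set N := Q.filter (G.Adj x)
  have hNQ : N ⊆ Q := filter_subset _ _
  have hNy (q) (hq : q ∈ N) : G.Adj y q := (htwin q (hNQ hq)).mp (mem_filter.mp hq).2
  have hcard : #N + 2 ≤ #Q := card_add_two_le_of_forall_adj hQ hNQ hx hy hxy
    (fun q hq => (mem_filter.mp hq).2) hNy
  obtain ⟨u₁, hu₁⟩ : N.Nonempty := by
    by_contra hN
    have hxQ (q) (hq : q ∈ Q) : ¬ G.Adj x q := fun h => hN ⟨q, mem_filter.mpr ⟨hq, h⟩⟩
    obtain ⟨q, hq, hyq⟩ := exists_mem_adj_of_forall_not_adj hconn hQc hQne hxQ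
    exact hxQ q hq ((htwin q hq).mpr hyq)
  obtain ⟨u₂, hu₂, w, hw, hu₂w⟩ :=
    one_lt_card.mp (show 1 < #(Q \ N) by rw [card_sdiff_of_subset hNQ]; omega)
  rw [mem_sdiff] at hu₂ hw
  have hxu₂ : ¬ G.Adj x u₂ := fun h => hu₂.2 (mem_filter.mpr ⟨hu₂.1, h⟩)
  have hxw : ¬ G.Adj x w := fun h => hw.2 (mem_filter.mpr ⟨hw.1, h⟩)
  have hu₁w : u₁ ≠ w := fun h => hw.2 (h ▸ hu₁)
  have hwS : w ∉ ({x, u₁, u₂} : Finset V) := by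
    simp only [mem_insert, mem_singleton, not_or]
    exact ⟨ne_of_mem_of_not_mem hw.1 hx, hu₁w.symm, hu₂w.symm⟩
  have hyS : y ∉ ({x, u₁, u₂} : Finset V) := by
    simp only [mem_insert, mem_singleton, not_or]
    exact ⟨hxy.ne.symm, (ne_of_mem_of_not_mem (hNQ hu₁) hy).symm,
      (ne_of_mem_of_not_mem hu₂.1 hy).symm⟩
  refine ⟨{x, u₁, u₂}, card_eq_three.mpr ⟨x, u₁, u₂, (ne_of_mem_of_not_mem (hNQ hu₁) hx).symm,
    (ne_of_mem_of_not_mem hu₂.1 hx).symm, fun h => hu₂.2 (h ▸ hu₁), rfl⟩,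
    isLocalResolvingSet_compl_triple ?_ (fun h => absurd h hxu₂) ?_⟩
  · exact fun _ => ⟨w, hwS, Or.inr ⟨hQ.isClique (hNQ hu₁) hw.1 hu₁w, hxw⟩⟩
  · exact fun _ => ⟨y, hyS, Or.inl ⟨(hNy u₁ hu₁).symm,
      fun h => hxu₂ ((htwin u₂ hu₂.1).mpr h.symm)⟩⟩

lemma localDim_le_card_sub_three (hconn : G.Connected) (hQ : G.IsMaximumClique Q)
    (hQc : Qᶜ = {x, y}) (hxy : x ≠ y) (hQ2 : 1 < #Q) : localDim G ≤ Fintype.card V - 3 := by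
  suffices ∃ S : Finset V, #S = 3 ∧ IsLocalResolvingSet G Sᶜ by
    obtain ⟨S, hS, hres⟩ := this
    simpa [card_compl, hS] using localDim_le hres
  by_cases htwin : G.Adj x y ∧ ∀ q ∈ Q, G.Adj x q ↔ G.Adj y q
  · exact exists_isLocalResolvingSet_compl_of_twins hconn hQ hQc (card_pos.mp (by omega))
      htwin.1 htwin.2
  obtain ⟨u, hu, hsep⟩ :
      ∃ u ∈ Q, G.Adj x y → ∃ w ∈ Q, w ≠ u ∧ Xor (G.Adj x w) (G.Adj y w) := by
    by_cases hadj : G.Adj x y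
    · obtain ⟨w, hw, hxor⟩ : ∃ w ∈ Q, ¬ (G.Adj x w ↔ G.Adj y w) := by
        simpa [hadj] using htwin
      obtain ⟨u, hu, huw⟩ := exists_mem_ne hQ2 w
      exact ⟨u, hu, fun _ => ⟨w, hw, huw.symm, (xor_iff_not_iff _ _).mpr hxor⟩⟩
    · obtain ⟨u, hu⟩ := card_pos.mp (by omega : 0 < #Q)
      exact ⟨u, hu, fun h => absurd h hadj⟩
  obtain ⟨hx, hy⟩ := notMem_of_compl_eq_pair hQc
  exact ⟨{x, y, u}, card_eq_three.mpr ⟨x, y, u, hxy, (ne_of_mem_of_not_mem hu hx).symm,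
    (ne_of_mem_of_not_mem hu hy).symm, rfl⟩,
    isLocalResolvingSet_compl_pair_insert hQ hQc hu hsep⟩

end MaximumClique

/-- If `G` is connected with `n(G) ≥ 5` and `ω(G) = n(G) - 2`, then
`n(G) - 4 ≤ dim_l(G) ≤ n(G) - 3`; moreover `dim_l(G) = n(G) - 3` iff `G` is
`{Γ₁,Γ₂}`-free, and `dim_l(G) = n(G) - 4` iff `G` contains an induced `Γ₁` or `Γ₂`. -/
theorem stmt_12 [Fintype V] (G : SimpleGraph V) (hconn : G.Connected)
    (hn : 5 ≤ Fintype.card V) (hw : G.cliqueNum = Fintype.card V - 2) :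
    (Fintype.card V - 4 ≤ localDim G ∧ localDim G ≤ Fintype.card V - 3) ∧
    (localDim G = Fintype.card V - 3 ↔
      IsEmpty (Gamma1 ↪g G) ∧ IsEmpty (Gamma2 ↪g G)) ∧
    (localDim G = Fintype.card V - 4 ↔
      (Nonempty (Gamma1 ↪g G) ∨ Nonempty (Gamma2 ↪g G))) := by
  classical
  obtain ⟨Q, hQ⟩ := G.maximumClique_exists
  have hQcard : #Q = Fintype.card V - 2 := hw ▸ G.maximumClique_card_eq_cliqueNum Q hQ
  have hQc2 : #Qᶜ = 2 := by rw [card_compl]; omega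
  obtain ⟨x, y, hxy, hQc⟩ := card_eq_two.mp hQc2
  obtain ⟨W, hW, hWcard⟩ := exists_isLocalResolvingSet_card_eq_localDim G
  have hlb : Fintype.card V - 4 ≤ localDim G := by
    have := card_le_card_add_two hQ.isClique hQc2 hW
    omega
  have hub := localDim_le_card_sub_three hconn hQ hQc hxy (by omega)
  have hΓ :
      localDim G = Fintype.card V - 4 ↔ Nonempty (Gamma1 ↪g G) ∨ Nonempty (Gamma2 ↪g G) :=
    ⟨fun h => nonempty_gamma_embedding_of_card_add_two_le hconn hQ.isClique hQc hxy hW (by omega),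
      fun h => le_antisymm (localDim_le_card_sub_four_of_gamma h) hlb⟩
  refine ⟨⟨hlb, hub⟩, ?_, hΓ⟩
  rw [← not_nonempty_iff, ← not_nonempty_iff, ← not_or, ← hΓ]
  omega
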